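/- arXiv:0812.2389 — 3 statements merged into one kernel-verified Lean document; each statement's English description precedes it below -/
import Mathlib

section
/- Fix θ ∈ (0,1) and M > 0. Define Φ(s) = (1/θ)(e^{θs} − 1) for s ≤ M and Φ(s) = (s − M)e^{θM} + (1/θ)(e^{θM} − 1) for s ≥ M, and β(s) = log(1+s). Then for all s ≥ 0: (i) Φ'(s) ≥ 1; (ii) 0 ≤ −(Φ ∘ β)''(s) ≤ (1 − θ + e^{(θ−1)M})/(1+s); and (iii) Φ(β(s)) → s monotonically as M → ∞ and θ → 1. -/
/-!
For `θ ≠ 0`, `Φ(s) = θ⁻¹ (T_u(θ s) - 1)` with `u = θ min(s, M)`, where `T_u(c) = (c - u + 1) eᵘ` is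
the tangent line of `exp` at `u`. By convexity of `exp`, `T_u(c)` increases with `u ≤ c`; hence `Φ`
increases with `M` and stays below `θ⁻¹ (e^{θs} - 1)`, a secant slope of the convex `θ ↦ e^{θs}`,
which increases with `θ` and equals `eˢ - 1` at `θ = 1`. Moreover `Φ' = e^{θ min(s, M)}` everywhere,
so `(Φ ∘ β)' = e^{θ min(β, M)} / (1 + s)`; its derivative is `(θ - 1) (1 + s)^{θ - 2}` below the kink
and `-e^{θM} / (1 + s)²` above it, bounded by `(1 + s)^θ ≤ 1 + s` resp. `eᴹ ≤ 1 + s`.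
-/

/-- The function `Φ = Φ_{M,θ}` of Lemma 3.2 of the paper. -/
noncomputable def PhiFn (θ M s : ℝ) : ℝ :=
  if s ≤ M then (1 / θ) * (Real.exp (θ * s) - 1)
  else (s - M) * Real.exp (θ * M) + (1 / θ) * (Real.exp (θ * M) - 1)

open Real Filter Set Topology

lemma tangent_exp_le_tangent_exp {u v c : ℝ} (huv : u ≤ v) (hvc : v ≤ c) :
    (c - u + 1) * exp u ≤ (c - v + 1) * exp v := by
  have hexp : exp v = exp u * exp (v - u) := by rw [← exp_add, add_sub_cancel]
  have hu := exp_pos u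
  calc (c - u + 1) * exp u ≤ (c - v + 1) * exp u * (v - u + 1) := by
        nlinarith [mul_nonneg (mul_nonneg (sub_nonneg.2 huv) (sub_nonneg.2 hvc)) hu.le]
    _ ≤ (c - v + 1) * exp u * exp (v - u) :=
        mul_le_mul_of_nonneg_left (add_one_le_exp _) (by nlinarith)
    _ = (c - v + 1) * exp v := by rw [hexp, mul_assoc]

lemma phiFn_eq_tangent {θ : ℝ} (hθ : θ ≠ 0) (M s : ℝ) :
    PhiFn θ M s = (1 / θ) * ((θ * s - θ * min s M + 1) * exp (θ * min s M) - 1) := by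
  unfold PhiFn
  split_ifs with h
  · rw [min_eq_left h]; ring
  · rw [min_eq_right (not_le.1 h).le]; field_simp; ring

lemma phiFn_le_phiFn_of_M_le {θ : ℝ} (hθ : 0 < θ) {M M' : ℝ} (hM : M ≤ M') (s : ℝ) :
    PhiFn θ M s ≤ PhiFn θ M' s := by
  rw [phiFn_eq_tangent hθ.ne', phiFn_eq_tangent hθ.ne']
  refine mul_le_mul_of_nonneg_left (sub_le_sub_right ?_ 1) (by positivity)
  exact tangent_exp_le_tangent_exp (by gcongr) (by gcongr; exact min_le_left _ _)

lemma phiFn_le_exp {θ : ℝ} (hθ : 0 < θ) (M s : ℝ) :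
    PhiFn θ M s ≤ (1 / θ) * (exp (θ * s) - 1) := by
  rw [phiFn_eq_tangent hθ.ne']
  gcongr
  simpa using tangent_exp_le_tangent_exp (c := θ * s)
    (mul_le_mul_of_nonneg_left (min_le_left s M) hθ.le) le_rfl

lemma one_div_mul_exp_mul_sub_one_mono {θ θ' : ℝ} (hθ : 0 < θ) (hθθ' : θ ≤ θ') (s : ℝ) :
    (1 / θ) * (exp (θ * s) - 1) ≤ (1 / θ') * (exp (θ' * s) - 1) := by
  have hconv : ConvexOn ℝ univ (fun θ : ℝ => exp (θ * s)) :=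
    convexOn_exp.comp_linearMap (LinearMap.id.smulRight s)
  have := hconv.secant_mono (a := 0) (mem_univ _) (mem_univ _) (mem_univ _) hθ.ne'
    (hθ.trans_le hθθ').ne' hθθ'
  simpa [div_eq_inv_mul] using this

lemma phiFn_le_phiFn_of_θ_le {θ θ' M : ℝ} (hθ : 0 < θ) (hθθ' : θ ≤ θ') (hM : 0 ≤ M) (s : ℝ) :
    PhiFn θ M s ≤ PhiFn θ' M s := by
  have hexp := one_div_mul_exp_mul_sub_one_mono hθ hθθ'
  unfold PhiFn
  split_ifs with h
  · exact hexp s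
  · have hslope : exp (θ * M) ≤ exp (θ' * M) := exp_le_exp.2 (by gcongr)
    nlinarith [not_le.1 h, hexp M]

lemma phiFn_log_le {θ : ℝ} (hθ : 0 < θ) (hθ1 : θ ≤ 1) (M : ℝ) {s : ℝ} (hs : -1 < s) :
    PhiFn θ M (log (1 + s)) ≤ s := by
  calc PhiFn θ M (log (1 + s)) ≤ (1 / θ) * (exp (θ * log (1 + s)) - 1) := phiFn_le_exp hθ M _
    _ ≤ (1 / 1) * (exp (1 * log (1 + s)) - 1) := one_div_mul_exp_mul_sub_one_mono hθ hθ1 _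
    _ = s := by rw [one_mul, exp_log (by linarith)]; ring

lemma hasDerivAt_ite_le {f g : ℝ → ℝ} {a d : ℝ} (hf : HasDerivAt f d a) (hg : HasDerivAt g d a)
    (hfg : f a = g a) : HasDerivAt (fun x => if x ≤ a then f x else g x) d a := by
  have hleft : HasDerivWithinAt (fun x => if x ≤ a then f x else g x) d (Iic a) a :=
    hf.hasDerivWithinAt.congr (fun x hx => if_pos hx) (if_pos le_rfl)
  have hright : HasDerivWithinAt (fun x => if x ≤ a then f x else g x) d (Ici a) a := by
    refine hg.hasDerivWithinAt.congr (fun x hx => ?_) (by simp [hfg])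
    rcases (mem_Ici.1 hx).eq_or_lt with rfl | hlt
    · simp [hfg]
    · simp [not_le.2 hlt]
  rw [← hasDerivWithinAt_univ, ← Iic_union_Ici]
  exact hleft.union hright

lemma hasDerivAt_phiFn {θ : ℝ} (hθ : θ ≠ 0) (M s : ℝ) :
    HasDerivAt (PhiFn θ M) (exp (θ * min s M)) s := by
  have hexp (t : ℝ) : HasDerivAt (fun t => (1 / θ) * (exp (θ * t) - 1)) (exp (θ * t)) t := by
    refine (((((hasDerivAt_id t).const_mul θ).exp).sub_const 1).const_mul (1 / θ)).congr_deriv ?_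
    simp [field]
  have hlin (t : ℝ) : HasDerivAt (fun t => (t - M) * exp (θ * M) + (1 / θ) * (exp (θ * M) - 1))
      (exp (θ * M)) t := by
    simpa using (((hasDerivAt_id t).sub_const M).mul_const (exp (θ * M))).add_const
      ((1 / θ) * (exp (θ * M) - 1))
  rcases lt_trichotomy s M with h | rfl | h
  · rw [min_eq_left h.le]
    exact (hexp s).congr_of_eventuallyEq <|
      eventually_of_mem (Iio_mem_nhds h) fun t ht => if_pos (le_of_lt ht)
  · rw [min_self]
    exact hasDerivAt_ite_le (hexp s) (hlin s) (by simp)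
  · rw [min_eq_right h.le]
    exact (hlin s).congr_of_eventuallyEq <|
      eventually_of_mem (Ioi_mem_nhds h) fun t ht => if_neg (not_le.2 ht)

lemma hasDerivAt_log_one_add {t : ℝ} (ht : -1 < t) :
    HasDerivAt (fun t => log (1 + t)) (1 / (1 + t)) t := by
  simpa using ((hasDerivAt_id t).const_add 1).log (by simp; linarith)

lemma hasDerivAt_phiFn_log {θ : ℝ} (hθ : θ ≠ 0) (M : ℝ) {t : ℝ} (ht : -1 < t) :
    HasDerivAt (fun t => PhiFn θ M (log (1 + t))) (exp (θ * min (log (1 + t)) M) / (1 + t)) t :=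
  ((hasDerivAt_phiFn hθ M _).comp t (hasDerivAt_log_one_add ht)).congr_deriv (by ring)

lemma deriv_phiFn_log_eventuallyEq {θ : ℝ} (hθ : θ ≠ 0) (M : ℝ) {s : ℝ} (hs : -1 < s) :
    deriv (fun t => PhiFn θ M (log (1 + t))) =ᶠ[𝓝 s]
      fun t => exp (θ * min (log (1 + t)) M) / (1 + t) :=
  eventually_of_mem (Ioi_mem_nhds hs) fun _ ht => (hasDerivAt_phiFn_log hθ M ht).deriv

lemma hasDerivAt_deriv_phiFn_log_of_lt {θ M s : ℝ} (hθ : θ ≠ 0) (hs : -1 < s)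
    (h : log (1 + s) < M) :
    HasDerivAt (deriv fun t => PhiFn θ M (log (1 + t)))
      ((θ - 1) * exp (θ * log (1 + s)) / (1 + s) ^ 2) s := by
  have hbelow : ∀ᶠ t in 𝓝 s, log (1 + t) < M :=
    (hasDerivAt_log_one_add hs).continuousAt.eventually_lt continuousAt_const h
  have hderiv : deriv (fun t => PhiFn θ M (log (1 + t))) =ᶠ[𝓝 s]
      fun t => exp (θ * log (1 + t)) / (1 + t) := by
    filter_upwards [deriv_phiFn_log_eventuallyEq hθ M hs, hbelow] with t hd ht
    rw [hd, min_eq_left ht.le]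
  have h1s : 1 + s ≠ 0 := by linarith
  refine HasDerivAt.congr_of_eventuallyEq ?_ hderiv
  refine ((((hasDerivAt_log_one_add hs).const_mul θ).exp).div
    ((hasDerivAt_id s).const_add 1) h1s).congr_deriv ?_
  simp [field]

lemma hasDerivAt_deriv_phiFn_log_of_gt {θ M s : ℝ} (hθ : θ ≠ 0) (hs : -1 < s)
    (h : M < log (1 + s)) :
    HasDerivAt (deriv fun t => PhiFn θ M (log (1 + t))) (-(exp (θ * M) / (1 + s) ^ 2)) s := by
  have habove : ∀ᶠ t in 𝓝 s, M < log (1 + t) :=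
    continuousAt_const.eventually_lt (hasDerivAt_log_one_add hs).continuousAt h
  have hderiv : deriv (fun t => PhiFn θ M (log (1 + t))) =ᶠ[𝓝 s]
      fun t => exp (θ * M) / (1 + t) := by
    filter_upwards [deriv_phiFn_log_eventuallyEq hθ M hs, habove] with t hd ht
    rw [hd, min_eq_right ht.le]
  have h1s : 1 + s ≠ 0 := by linarith
  refine HasDerivAt.congr_of_eventuallyEq ?_ hderiv
  refine ((hasDerivAt_const s (exp (θ * M))).div
    ((hasDerivAt_id s).const_add 1) h1s).congr_deriv ?_
  simp [field]

lemma neg_deriv_deriv_phiFn_log_bounds {θ M s : ℝ} (hθ : 0 < θ) (hθ1 : θ ≤ 1) (hs : 0 ≤ s)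
    (hne : log (1 + s) ≠ M) :
    0 ≤ -(deriv (deriv (fun t => PhiFn θ M (log (1 + t)))) s) ∧
      -(deriv (deriv (fun t => PhiFn θ M (log (1 + t)))) s)
        ≤ (1 - θ + exp ((θ - 1) * M)) / (1 + s) := by
  have h1s : 0 < 1 + s := by linarith
  have hθ1' : 0 ≤ 1 - θ := by linarith
  rcases hne.lt_or_gt with h | h
  · rw [(hasDerivAt_deriv_phiFn_log_of_lt hθ.ne' (by linarith) h).deriv]
    have hpow : exp (θ * log (1 + s)) ≤ 1 + s := by
      calc exp (θ * log (1 + s)) ≤ exp (1 * log (1 + s)) :=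
            exp_le_exp.2 (by gcongr; exact log_nonneg (by linarith))
        _ = 1 + s := by rw [one_mul, exp_log h1s]
    rw [show -((θ - 1) * exp (θ * log (1 + s)) / (1 + s) ^ 2)
        = (1 - θ) * exp (θ * log (1 + s)) / (1 + s) ^ 2 by ring]
    refine ⟨by positivity, ?_⟩
    calc (1 - θ) * exp (θ * log (1 + s)) / (1 + s) ^ 2 ≤ (1 - θ) * (1 + s) / (1 + s) ^ 2 := by
          gcongr
      _ = (1 - θ) / (1 + s) := by field_simp
      _ ≤ (1 - θ + exp ((θ - 1) * M)) / (1 + s) := by gcongr; linarith [exp_pos ((θ - 1) * M)]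
  · rw [(hasDerivAt_deriv_phiFn_log_of_gt hθ.ne' (by linarith) h).deriv, neg_neg]
    have hexpM : exp M < 1 + s := by rwa [lt_log_iff_exp_lt h1s] at h
    refine ⟨by positivity, ?_⟩
    calc exp (θ * M) / (1 + s) ^ 2 = exp ((θ - 1) * M) * exp M / (1 + s) ^ 2 := by
          rw [← exp_add]; ring_nf
      _ ≤ exp ((θ - 1) * M) * (1 + s) / (1 + s) ^ 2 := by gcongr
      _ = exp ((θ - 1) * M) / (1 + s) := by field_simp
      _ ≤ (1 - θ + exp ((θ - 1) * M)) / (1 + s) := by gcongr; linarith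

lemma iSup_phiFn_log {s : ℝ} (hs : -1 < s) :
    (⨆ p : {q : ℝ × ℝ // q.1 ∈ Ioo (0:ℝ) 1 ∧ 0 < q.2}, PhiFn p.val.1 p.val.2 (log (1 + s)))
      = s := by
  set b := log (1 + s)
  have hle (p : {q : ℝ × ℝ // q.1 ∈ Ioo (0:ℝ) 1 ∧ 0 < q.2}) : PhiFn p.val.1 p.val.2 b ≤ s :=
    phiFn_log_le p.2.1.1 p.2.1.2.le _ hs
  have : Nonempty {q : ℝ × ℝ // q.1 ∈ Ioo (0:ℝ) 1 ∧ 0 < q.2} :=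
    ⟨⟨(1 / 2, 1), by norm_num, by norm_num⟩⟩
  refine le_antisymm (ciSup_le hle) ?_
  have hlim : Tendsto (fun θ => (1 / θ) * (exp (θ * b) - 1)) (𝓝[<] 1) (𝓝 s) := by
    have hcont : ContinuousAt (fun θ : ℝ => (1 / θ) * (exp (θ * b) - 1)) 1 := by
      fun_prop (disch := norm_num)
    convert hcont.tendsto.mono_left nhdsWithin_le_nhds using 2
    simp [b, exp_log (show 0 < 1 + s by linarith)]
  refine le_of_tendsto hlim ?_
  filter_upwards [Ioo_mem_nhdsLT (show (0:ℝ) < 1 by norm_num)] with θ hθ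
  -- with `M = |b| + 1` the point `b` lies on the exponential piece of `Φ`
  refine le_ciSup_of_le ⟨s, forall_mem_range.2 hle⟩ ⟨(θ, |b| + 1), hθ, by positivity⟩ ?_
  simp [PhiFn, (le_abs_self b).trans (lt_add_one _).le]

/-- Lemma 3.2: with `β(s) = log(1+s)`, one has `Φ' ≥ 1`,
`0 ≤ −(Φ∘β)'' ≤ (1−θ+e^{(θ−1)M})/(1+s)` (away from the kink `β(s)=M`),
and `Φ(β(s)) ↑ s` as `M ↑ ∞`, `θ ↑ 1`. -/
theorem stmt_7 (θ M : ℝ) (hθ : θ ∈ Set.Ioo (0:ℝ) 1) (hM : 0 < M) :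
    (∀ s : ℝ, 0 ≤ s → 1 ≤ deriv (PhiFn θ M) s) ∧
    (∀ s : ℝ, 0 ≤ s → Real.log (1 + s) ≠ M →
      0 ≤ -(deriv (deriv (fun t => PhiFn θ M (Real.log (1 + t)))) s) ∧
      -(deriv (deriv (fun t => PhiFn θ M (Real.log (1 + t)))) s)
        ≤ (1 - θ + Real.exp ((θ - 1) * M)) / (1 + s)) ∧
    (∀ s : ℝ, 0 ≤ s →
      PhiFn θ M (Real.log (1 + s)) ≤ s ∧
      (∀ θ' M', θ ≤ θ' → θ' < 1 → M ≤ M' →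
        PhiFn θ M (Real.log (1 + s)) ≤ PhiFn θ' M' (Real.log (1 + s))) ∧
      (⨆ p : {q : ℝ × ℝ // q.1 ∈ Set.Ioo (0:ℝ) 1 ∧ 0 < q.2},
        PhiFn p.val.1 p.val.2 (Real.log (1 + s))) = s) := by
  obtain ⟨hθ0, hθ1⟩ := hθ
  refine ⟨fun s hs => ?_, fun s hs hne => neg_deriv_deriv_phiFn_log_bounds hθ0 hθ1.le hs hne,
    fun s hs => ⟨phiFn_log_le hθ0 hθ1.le M (by linarith), fun θ' M' hθθ' _ hMM' => ?_,
      iSup_phiFn_log (by linarith)⟩⟩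
  · rw [(hasDerivAt_phiFn hθ0.ne' M s).deriv]
    exact one_le_exp (mul_nonneg hθ0.le (le_min hs hM.le))
  · calc PhiFn θ M (log (1 + s)) ≤ PhiFn θ M' (log (1 + s)) := phiFn_le_phiFn_of_M_le hθ0 hMM' _
      _ ≤ PhiFn θ' M' (log (1 + s)) := phiFn_le_phiFn_of_θ_le hθ0 hθθ' (hM.le.trans hMM') _
end

section
/- Let Y be a finite measure space and (ψ_n) nonnegative measurable functions on Y that r-converge to a function ψ which is almost everywhere finite: min(ψ_n, M) ⇀ T̄_M weak-* in L^∞ for each M with T̄_M ↑ ψ a.e. Then (ψ_n) is asymptotically bounded in measure: for every ε > 0 there exist m and n_0 such that meas{y : ψ_n(y) ≥ m} < ε for all n ≥ n_0. -/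
open MeasureTheory Filter

open scoped ENNReal

/-!
Choose `K` with `ν {ψ > K} < ε / 2` and put `A = {ψ ≤ K}`. Since `T̄_M ↑ ψ`, we have `T̄_M ≤ ψ ≤ K`
on `A`, so testing the weak convergence against `1_A` gives `∫_A min(ψ_n, M) ≤ K ν(Y) + 1` for
large `n`. Chebyshev then bounds `ν ({ψ_n ≥ M} ∩ A)` by `(K ν(Y) + 1) / M`, which is `< ε / 2`
once `M` is large.
-/

section

variable {Y : Type*} [MeasurableSpace Y] {ν : Measure Y}

lemma exists_nat_measure_setOf_lt_lt [IsFiniteMeasure ν] {ψ : Y → ℝ} (hψ : Measurable ψ)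
    {δ : ℝ≥0∞} (hδ : 0 < δ) : ∃ K : ℕ, ν {y | (K : ℝ) < ψ y} < δ := by
  have hanti : Antitone fun k : ℕ => {y | (k : ℝ) < ψ y} :=
    fun k l hkl y (hy : (l : ℝ) < ψ y) => (Nat.cast_le.mpr hkl).trans_lt hy
  have hempty : (⋂ k : ℕ, {y | (k : ℝ) < ψ y}) = ∅ :=
    Set.iInter_eq_empty_iff.mpr fun y => (exists_nat_ge (ψ y)).imp fun _ hk => hk.not_gt
  have htend := tendsto_measure_iInter_atTop (μ := ν)
    (fun k => (measurableSet_lt measurable_const hψ).nullMeasurableSet) hanti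
    ⟨0, measure_ne_top ν _⟩
  rw [hempty, measure_empty] at htend
  exact (htend.eventually_lt_const hδ).exists

lemma integral_mul_indicator_le_of_ae_le [IsFiniteMeasure ν] {h ψ : Y → ℝ} {A : Set Y}
    (hA : MeasurableSet A) {K : ℝ} (hK : 0 ≤ K) (hψA : ∀ y ∈ A, ψ y ≤ K)
    (hhψ : ∀ᵐ y ∂ν, h y ≤ ψ y) :
    ∫ y, h y * A.indicator 1 y ∂ν ≤ K * ν.real Set.univ := by
  have hKA : Integrable (fun y => K * A.indicator 1 y) ν :=
    ((integrable_const 1).indicator hA).const_mul K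
  have hle : ∀ᵐ y ∂ν, h y * A.indicator 1 y ≤ K * A.indicator 1 y := by
    filter_upwards [hhψ] with y hy
    by_cases hyA : y ∈ A
    · simpa [hyA] using hy.trans (hψA y hyA)
    · simp [hyA]
  calc ∫ y, h y * A.indicator 1 y ∂ν ≤ ∫ y, K * A.indicator 1 y ∂ν := by
        by_cases hint : Integrable (fun y => h y * A.indicator 1 y) ν
        · exact integral_mono_ae hint hKA hle
        · rw [integral_undef hint]
          exact integral_nonneg fun y => mul_nonneg hK (Set.indicator_nonneg (by simp) y)
    _ = K * ν.real A := by
        rw [integral_const_mul, integral_indicator_one hA]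
    _ ≤ K * ν.real Set.univ :=
        mul_le_mul_of_nonneg_left (measureReal_mono (Set.subset_univ A)) hK

lemma mul_measureReal_inter_le_integral_min_mul_indicator [IsFiniteMeasure ν] {f : Y → ℝ}
    (hf : Measurable f) (hf0 : 0 ≤ f) {A : Set Y} (hA : MeasurableSet A) {M : ℝ} (hM : 0 < M) :
    M * ν.real ({y | M ≤ f y} ∩ A) ≤ ∫ y, min (f y) M * A.indicator 1 y ∂ν := by
  have hset : {y | M ≤ min (f y) M * A.indicator 1 y} = {y | M ≤ f y} ∩ A := by
    ext y
    by_cases hyA : y ∈ A <;> simp [hyA, hM.not_ge]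
  rw [← hset]
  refine mul_meas_ge_le_integral_of_nonneg
    (Eventually.of_forall fun y => mul_nonneg (le_min (hf0 y) hM.le)
      (Set.indicator_nonneg (by simp) y)) ?_ M
  refine Integrable.mono' (integrable_const M)
    ((hf.min measurable_const).mul (measurable_one.indicator hA)).aestronglyMeasurable
    (Eventually.of_forall fun y => ?_)
  have hmin : 0 ≤ min (f y) M := le_min (hf0 y) hM.le
  by_cases hyA : y ∈ A <;> simp [hyA, abs_of_nonneg hmin, hM.le]

end

/-- If `(ψ_n)` are nonnegative measurable functions on a finite measure space that
r-converge to an a.e. finite (real-valued) `ψ` — i.e. `min(ψ_n, M) ⇀ T̄_M` weak-* in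
`L^∞` for each `M` with `T̄_M ↑ ψ` a.e. — then `(ψ_n)` is asymptotically bounded in
measure: for every `ε > 0` there are `m` and `n₀` with `ν{ψ_n ≥ m} < ε` for `n ≥ n₀`. -/
theorem stmt_10 {Y : Type*} [MeasurableSpace Y] (ν : Measure Y) [IsFiniteMeasure ν]
    (ψn : ℕ → Y → ℝ) (ψ : Y → ℝ)
    (hψnmeas : ∀ n, Measurable (ψn n)) (hψmeas : Measurable ψ)
    (hψn0 : ∀ n y, 0 ≤ ψn n y)
    (Tbar : ℕ → Y → ℝ)
    (hweak : ∀ M : ℕ, ∀ g : Y → ℝ, Integrable g ν →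
      Tendsto (fun n => ∫ y, min (ψn n y) (M : ℝ) * g y ∂ν) atTop
        (nhds (∫ y, Tbar M y * g y ∂ν)))
    (hmono : ∀ᵐ y ∂ν, Monotone (fun M => Tbar M y) ∧
      Tendsto (fun M => Tbar M y) atTop (nhds (ψ y))) :
    ∀ ε : ℝ, 0 < ε → ∃ m : ℝ, ∃ n₀ : ℕ, ∀ n, n₀ ≤ n →
      ν {y | m ≤ ψn n y} < ENNReal.ofReal ε := by
  intro ε hε
  have hε2 : 0 < ε / 2 := half_pos hε
  obtain ⟨K, hK⟩ := exists_nat_measure_setOf_lt_lt (ν := ν) hψmeas (ENNReal.ofReal_pos.mpr hε2)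
  set A := {y | ψ y ≤ (K : ℝ)}
  have hA : MeasurableSet A := measurableSet_le hψmeas measurable_const
  have hC : 0 ≤ (K : ℝ) * ν.real Set.univ := by positivity
  obtain ⟨M, hM⟩ := exists_nat_gt ((K * ν.real Set.univ + 1) / (ε / 2))
  have hMpos : (0 : ℝ) < M := (div_pos (by linarith) hε2).trans hM
  have hTbar : ∀ᵐ y ∂ν, Tbar M y ≤ ψ y := hmono.mono fun y hy => hy.1.ge_of_tendsto hy.2 M
  have hlim : ∫ y, Tbar M y * A.indicator 1 y ∂ν < K * ν.real Set.univ + 1 :=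
    (integral_mul_indicator_le_of_ae_le hA K.cast_nonneg (fun _ hy => hy) hTbar).trans_lt
      (lt_add_one _)
  obtain ⟨n₀, hn₀⟩ := ((hweak M _ ((integrable_const 1).indicator hA)).eventually
    (eventually_le_nhds hlim)).exists_forall_of_atTop
  refine ⟨M, n₀, fun n hn => ?_⟩
  have hinter : ν ({y | (M : ℝ) ≤ ψn n y} ∩ A) < ENNReal.ofReal (ε / 2) := by
    rw [ENNReal.lt_ofReal_iff_toReal_lt (measure_ne_top ν _)]
    have hcheb := (mul_measureReal_inter_le_integral_min_mul_indicator (hψnmeas n) (hψn0 n) hA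
      hMpos).trans (hn₀ n hn)
    rw [div_lt_iff₀ hε2] at hM
    exact lt_of_mul_lt_mul_left (hcheb.trans_lt hM) hMpos.le
  calc ν {y | (M : ℝ) ≤ ψn n y}
      ≤ ν ({y | (M : ℝ) ≤ ψn n y} ∩ A) + ν ({y | (M : ℝ) ≤ ψn n y} \ A) :=
        measure_le_inter_add_sdiff _ _ _
    _ < ENNReal.ofReal (ε / 2) + ENNReal.ofReal (ε / 2) :=
        ENNReal.add_lt_add hinter
          ((measure_mono fun y (hy : _ ∧ ¬ψ y ≤ K) => not_le.mp hy.2).trans_lt hK)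
    _ = ENNReal.ofReal ε := by rw [← ENNReal.ofReal_add hε2.le hε2.le, add_halves]
end

section
/- Let O ⊂ ℝ^d be open and (u_n) a bounded sequence in L¹_loc(O) such that β(u_n) → β(u) in the sense of distributions (tested against C_c(O)) for every β ∈ W²'∞_loc(ℝ) with β'' of compact support. Then u_n → u strongly in L¹_loc(O). -/
/-!
Truncate at level `k` with a smooth, bounded `Tₖ = smoothTrunc k` that is the identity on
`[-k, k]`, and control the error by the smooth nonnegative `Eₖ = smoothExcess k ≥ |s - Tₖ s|`,
which vanishes on `[-k, k]`; `Tₖ`, `Tₖ²` and `Eₖ` are admissible nonlinearities. Fix a cutoff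
`χ ∈ C_c(O)` equal to `1` on `K`. Since the `Tₖ(uₙ)` are uniformly bounded, their weak convergence
extends by density from `C_c(O)` to the bounded compactly supported test function `Tₖ(u) χ`; with
the convergence of `∫ Tₖ(uₙ)² χ` this gives `∫ (Tₖ(uₙ) - Tₖ(u))² χ → 0`, hence `Tₖ(uₙ) → Tₖ(u)`
in `L¹(K)`. The remainder is at most `∫ Eₖ(uₙ) χ + ∫ Eₖ(u) χ → 2 ∫ Eₖ(u) χ`, which tends to `0`
as `k → ∞` by dominated convergence.
-/

open MeasureTheory Filter Set Real Topology Function ContDiff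

lemma tendsto_zero_of_le_of_tendsto {α ι : Type*} {l : Filter α} {L : Filter ι} [L.NeBot]
    {a : α → ℝ} {b : ι → α → ℝ} {c : ι → ℝ} (ha : ∀ n, 0 ≤ a n) (hab : ∀ k n, a n ≤ b k n)
    (hb : ∀ k, Tendsto (b k) l (𝓝 (c k))) (hc : Tendsto c L (𝓝 0)) :
    Tendsto a l (𝓝 0) := by
  refine tendsto_order.2 ⟨fun ε hε => Eventually.of_forall fun n => hε.trans_le (ha n),
    fun ε hε => ?_⟩
  obtain ⟨k, hk⟩ := (hc.eventually (gt_mem_nhds hε)).exists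
  exact ((hb k).eventually (gt_mem_nhds hk)).mono fun n hn => (hab k n).trans_lt hn

lemma abs_le_mul_sq_add_inv {a : ℝ} (ha : 0 < a) (x : ℝ) : |x| ≤ a * x ^ 2 + a⁻¹ := by
  rw [← mul_le_mul_iff_right₀ ha, mul_add, mul_inv_cancel₀ ha.ne', ← sq_abs x]
  nlinarith [sq_nonneg (a * |x| - 1), mul_nonneg ha.le (abs_nonneg x)]

noncomputable def ramp (x : ℝ) : ℝ := ∫ t in (0 : ℝ)..x, smoothTransition t

lemma hasDerivAt_ramp (x : ℝ) : HasDerivAt ramp (smoothTransition x) x :=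
  (smoothTransition.continuous.integral_hasStrictDerivAt 0 x).hasDerivAt

@[fun_prop]
lemma contDiff_ramp {n : ℕ∞} : ContDiff ℝ n ramp := by
  have hderiv : deriv ramp = smoothTransition := funext fun x => (hasDerivAt_ramp x).deriv
  refine ContDiff.of_le ?_ (WithTop.coe_le_coe.2 le_top)
  rw [contDiff_infty_iff_deriv, hderiv]
  exact ⟨fun x => (hasDerivAt_ramp x).differentiableAt, smoothTransition.contDiff⟩

lemma ramp_of_nonpos {x : ℝ} (hx : x ≤ 0) : ramp x = 0 := by
  rw [ramp, intervalIntegral.integral_congr (g := fun _ => (0 : ℝ)), intervalIntegral.integral_zero]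
  intro t ht
  rw [uIcc_of_ge hx] at ht
  exact smoothTransition.zero_of_nonpos ht.2

lemma ramp_nonneg (x : ℝ) : 0 ≤ ramp x := by
  rcases le_total x 0 with hx | hx
  · exact (ramp_of_nonpos hx).ge
  · exact intervalIntegral.integral_nonneg hx fun t _ => smoothTransition.nonneg t

lemma ramp_le_max (x : ℝ) : ramp x ≤ max x 0 := by
  rcases le_total x 0 with hx | hx
  · simp [ramp_of_nonpos hx]
  · calc ramp x ≤ ∫ _ in (0 : ℝ)..x, (1 : ℝ) :=
          intervalIntegral.integral_mono_on hx (smoothTransition.continuous.intervalIntegrable _ _)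
            intervalIntegrable_const fun t _ => smoothTransition.le_one t
      _ ≤ max x 0 := by simp

lemma ramp_of_one_le {x : ℝ} (hx : 1 ≤ x) : ramp x = x - 1 + ramp 1 := by
  have hint := fun a b => smoothTransition.continuous.intervalIntegrable (μ := volume) a b
  have hone : ∫ t in (1 : ℝ)..x, smoothTransition t = x - 1 := by
    rw [intervalIntegral.integral_congr (g := fun _ => (1 : ℝ)), intervalIntegral.integral_const,
      smul_eq_mul, mul_one]
    intro t ht
    rw [uIcc_of_le hx] at ht
    exact smoothTransition.one_of_one_le ht.1
  rw [ramp, ← intervalIntegral.integral_add_adjacent_intervals (hint 0 1) (hint 1 x), hone, ramp,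
    add_comm]

lemma sub_one_le_ramp (x : ℝ) : x - 1 ≤ ramp x := by
  rcases le_total 1 x with hx | hx
  · linarith [ramp_of_one_le hx, ramp_nonneg 1]
  · linarith [ramp_nonneg x]

-- Smooth versions of the truncation `max (-k) (min s k)` and of the excess `(|s| - k)⁺`, with
-- `ramp` a smoothed `max x 0`.
noncomputable def smoothTrunc (k s : ℝ) : ℝ := s - ramp (s - k) + ramp (-s - k)

noncomputable def smoothExcess (k s : ℝ) : ℝ := ramp (s - k) + ramp (-s - k)

lemma abs_sub_smoothTrunc_le (k s : ℝ) : |s - smoothTrunc k s| ≤ smoothExcess k s := by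
  rw [smoothTrunc, smoothExcess, abs_le]
  constructor <;> linarith [ramp_nonneg (s - k), ramp_nonneg (-s - k)]

lemma abs_smoothTrunc_le {k : ℝ} (hk : 0 ≤ k) (s : ℝ) : |smoothTrunc k s| ≤ k + 1 := by
  rw [smoothTrunc, abs_le]
  have := ramp_le_max (s - k); have := ramp_le_max (-s - k)
  have := sub_one_le_ramp (s - k); have := sub_one_le_ramp (-s - k)
  rcases le_total s 0 with hs | hs
  · rw [ramp_of_nonpos (by linarith : s - k ≤ 0)]
    constructor <;> cases max_cases (-s - k) 0 <;> linarith
  · rw [ramp_of_nonpos (by linarith : -s - k ≤ 0)]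
    constructor <;> cases max_cases (s - k) 0 <;> linarith

lemma smoothExcess_nonneg (k s : ℝ) : 0 ≤ smoothExcess k s :=
  add_nonneg (ramp_nonneg _) (ramp_nonneg _)

lemma smoothExcess_le_abs {k : ℝ} (hk : 0 ≤ k) (s : ℝ) : smoothExcess k s ≤ |s| := by
  have := ramp_le_max (s - k); have := ramp_le_max (-s - k)
  rw [smoothExcess]
  cases abs_cases s <;> cases max_cases (s - k) 0 <;> cases max_cases (-s - k) 0 <;> linarith

lemma smoothExcess_of_abs_le {k s : ℝ} (h : |s| ≤ k) : smoothExcess k s = 0 := by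
  rw [abs_le] at h
  rw [smoothExcess, ramp_of_nonpos (by linarith), ramp_of_nonpos (by linarith), add_zero]

lemma contDiff_smoothTrunc (k : ℝ) {n : ℕ∞} : ContDiff ℝ n (smoothTrunc k) := by
  unfold smoothTrunc; fun_prop

lemma contDiff_smoothExcess (k : ℝ) {n : ℕ∞} : ContDiff ℝ n (smoothExcess k) := by
  unfold smoothExcess; fun_prop

lemma continuous_smoothTrunc (k : ℝ) : Continuous (smoothTrunc k) :=
  (contDiff_smoothTrunc k (n := 0)).continuous

lemma continuous_smoothExcess (k : ℝ) : Continuous (smoothExcess k) :=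
  (contDiff_smoothExcess k (n := 0)).continuous

lemma hasCompactSupport_iteratedDeriv_two_of_eventually_affine {f : ℝ → ℝ} (R : ℝ)
    (h : ∀ x, R < |x| → ∃ a b : ℝ, f =ᶠ[𝓝 x] fun y => a * y + b) :
    HasCompactSupport (iteratedDeriv 2 f) := by
  refine HasCompactSupport.intro (isCompact_Icc (a := -R) (b := R)) fun x hx => ?_
  obtain ⟨a, b, hab⟩ := h x (by rw [mem_Icc, ← abs_le] at hx; linarith)
  have hderiv : deriv (fun y => a * y + b) = fun _ => a := by
    funext y; simp
  rw [iteratedDeriv_succ, iteratedDeriv_one, hab.deriv.deriv_eq, hderiv, deriv_const]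

lemma eventually_smoothTrunc_smoothExcess_affine {k x : ℝ} (hk : 0 ≤ k) (hx : k + 1 < |x|) :
    ∃ σ : ℝ, ∀ᶠ y in 𝓝 x, smoothTrunc k y = σ * (k + 1 - ramp 1) ∧
      smoothExcess k y = σ * y - (k + 1 - ramp 1) := by
  rcases lt_abs.mp hx with hx | hx
  · refine ⟨1, ?_⟩
    filter_upwards [Ioi_mem_nhds hx] with y (hy : k + 1 < y)
    rw [smoothTrunc, smoothExcess, ramp_of_one_le (by linarith : 1 ≤ y - k),
      ramp_of_nonpos (by linarith : -y - k ≤ 0)]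
    constructor <;> ring
  · refine ⟨-1, ?_⟩
    filter_upwards [Iio_mem_nhds (by linarith : x < -(k + 1))] with y (hy : y < -(k + 1))
    rw [smoothTrunc, smoothExcess, ramp_of_one_le (by linarith : 1 ≤ -y - k),
      ramp_of_nonpos (by linarith : y - k ≤ 0)]
    constructor <;> ring

lemma hasCompactSupport_iteratedDeriv_two_smoothTrunc {k : ℝ} (hk : 0 ≤ k) :
    HasCompactSupport (iteratedDeriv 2 (smoothTrunc k)) := by
  refine hasCompactSupport_iteratedDeriv_two_of_eventually_affine (k + 1) fun x hx => ?_
  obtain ⟨σ, hσ⟩ := eventually_smoothTrunc_smoothExcess_affine hk hx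
  exact ⟨0, σ * (k + 1 - ramp 1), hσ.mono fun y hy => by simp [hy.1]⟩

lemma hasCompactSupport_iteratedDeriv_two_smoothTrunc_sq {k : ℝ} (hk : 0 ≤ k) :
    HasCompactSupport (iteratedDeriv 2 fun s => smoothTrunc k s ^ 2) := by
  refine hasCompactSupport_iteratedDeriv_two_of_eventually_affine (k + 1) fun x hx => ?_
  obtain ⟨σ, hσ⟩ := eventually_smoothTrunc_smoothExcess_affine hk hx
  exact ⟨0, (σ * (k + 1 - ramp 1)) ^ 2, hσ.mono fun y hy => by simp [hy.1]⟩

lemma hasCompactSupport_iteratedDeriv_two_smoothExcess {k : ℝ} (hk : 0 ≤ k) :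
    HasCompactSupport (iteratedDeriv 2 (smoothExcess k)) := by
  refine hasCompactSupport_iteratedDeriv_two_of_eventually_affine (k + 1) fun x hx => ?_
  obtain ⟨σ, hσ⟩ := eventually_smoothTrunc_smoothExcess_affine hk hx
  exact ⟨σ, -(k + 1 - ramp 1), hσ.mono fun y hy => by rw [hy.2]; ring⟩

section Integrals

variable {X : Type*} [MeasurableSpace X] {μ : Measure X}

lemma abs_integral_mul_sub_integral_mul_le {f g ρ : X → ℝ} {M : ℝ}
    (hf : AEStronglyMeasurable f μ) (hfM : ∀ x, |f x| ≤ M) (hg : Integrable g μ)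
    (hρ : Integrable ρ μ) :
    |∫ x, f x * g x ∂μ - ∫ x, f x * ρ x ∂μ| ≤ M * ∫ x, |g x - ρ x| ∂μ := by
  have hbdd : ∀ᵐ x ∂μ, ‖f x‖ ≤ M := ae_of_all _ hfM
  rw [← integral_sub (hg.bdd_mul hf hbdd) (hρ.bdd_mul hf hbdd), ← integral_const_mul]
  refine (abs_integral_le_integral_abs).trans (integral_mono_of_nonneg
    (ae_of_all _ fun _ => abs_nonneg _) ((hg.sub hρ).abs.const_mul M) (ae_of_all _ fun x => ?_))
  dsimp only
  rw [← mul_sub, abs_mul]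
  exact mul_le_mul_of_nonneg_right (hfM x) (abs_nonneg _)

lemma setIntegral_le_integral_mul {K : Set X} {f χ : X → ℝ} (hK : MeasurableSet K)
    (hf : ∀ x, 0 ≤ f x) (hχ : ∀ x, 0 ≤ χ x) (hχK : EqOn χ 1 K)
    (hfχ : Integrable (fun x => f x * χ x) μ) :
    ∫ x in K, f x ∂μ ≤ ∫ x, f x * χ x ∂μ :=
  calc ∫ x in K, f x ∂μ = ∫ x in K, f x * χ x ∂μ :=
        setIntegral_congr_fun hK fun x hx => by simp [hχK hx]
    _ ≤ ∫ x, f x * χ x ∂μ :=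
        setIntegral_le_integral hfχ (ae_of_all _ fun x => mul_nonneg (hf x) (hχ x))

lemma integral_mul_le_setIntegral {L : Set X} {f χ : X → ℝ} (hf : ∀ x, 0 ≤ f x)
    (hχ : ∀ x, χ x ∈ Icc 0 1) (hχL : support χ ⊆ L) (hfL : IntegrableOn f L μ) :
    ∫ x, f x * χ x ∂μ ≤ ∫ x in L, f x ∂μ := by
  rw [← setIntegral_eq_integral_of_forall_compl_eq_zero fun x hx => by
    rw [notMem_support.1 fun h => hx (hχL h), mul_zero]]
  exact integral_mono_of_nonneg (ae_of_all _ fun x => mul_nonneg (hf x) (hχ x).1) hfL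
    (ae_of_all _ fun x => mul_le_of_le_one_right (hf x) (hχ x).2)

lemma MeasureTheory.IntegrableOn.integrable_mul_of_support_subset {L : Set X} {f χ : X → ℝ}
    (hf : IntegrableOn f L μ) (hχ : AEStronglyMeasurable χ μ) (hχ1 : ∀ x, |χ x| ≤ 1)
    (hχL : support χ ⊆ L) : Integrable (fun x => f x * χ x) μ :=
  (integrableOn_iff_integrable_of_support_subset
    ((support_mul_subset_right _ _).trans hχL)).1
    (hf.mul_bdd hχ.restrict (ae_of_all _ fun x => (hχ1 x)))

lemma tendsto_setIntegral_abs_of_tendsto_integral_sq_mul {K : Set X} {h : ℕ → X → ℝ}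
    {χ : X → ℝ} {M : ℝ} (hK : MeasurableSet K) (hKμ : μ K ≠ ⊤)
    (hh : ∀ n, AEStronglyMeasurable (h n) μ) (hhM : ∀ n x, |h n x| ≤ M)
    (hχ : Integrable χ μ) (hχ0 : ∀ x, 0 ≤ χ x) (hχK : EqOn χ 1 K)
    (hlim : Tendsto (fun n => ∫ x, h n x ^ 2 * χ x ∂μ) atTop (𝓝 0)) :
    Tendsto (fun n => ∫ x in K, |h n x| ∂μ) atTop (𝓝 0) := by
  have hsqM : ∀ n x, ‖h n x ^ 2‖ ≤ M ^ 2 := fun n x => by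
    rw [norm_pow, norm_eq_abs]; exact pow_le_pow_left₀ (abs_nonneg _) (hhM n x) 2
  have hsq : ∀ n, IntegrableOn (fun x => h n x ^ 2) K μ := fun n =>
    Measure.integrableOn_of_bounded hKμ ((hh n).pow 2) (ae_of_all _ (hsqM n))
  refine tendsto_zero_of_le_of_tendsto (L := atTop)
    (b := fun (k : ℕ) n => (k + 1) * ∫ x, h n x ^ 2 * χ x ∂μ + μ.real K * (1 / (k + 1)))
    (fun n => setIntegral_nonneg hK fun _ _ => abs_nonneg _) (fun k n => ?_)
    (fun k => by simpa using (hlim.const_mul (k + 1 : ℝ)).add_const (μ.real K * (1 / (k + 1))))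
    (by simpa using tendsto_one_div_add_atTop_nhds_zero_nat.const_mul (μ.real K))
  have hk : (0 : ℝ) < k + 1 := by positivity
  calc ∫ x in K, |h n x| ∂μ ≤ ∫ x in K, ((k + 1) * h n x ^ 2 + (k + 1 : ℝ)⁻¹) ∂μ :=
        setIntegral_mono_on (Measure.integrableOn_of_bounded hKμ
            (continuous_abs.comp_aestronglyMeasurable (hh n))
            (ae_of_all _ fun x => by rw [norm_abs_eq_norm, norm_eq_abs]; exact hhM n x))
          (((hsq n).const_mul _).fun_add (integrableOn_const hKμ)) hK
          fun x _ => abs_le_mul_sq_add_inv hk _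
    _ = (k + 1) * ∫ x in K, h n x ^ 2 ∂μ + μ.real K * (1 / (k + 1)) := by
        rw [integral_add ((hsq n).const_mul _) (integrableOn_const hKμ), integral_const_mul,
          setIntegral_const, smul_eq_mul, one_div]
    _ ≤ _ := by
        gcongr
        exact setIntegral_le_integral_mul hK (fun x => sq_nonneg _) hχ0 hχK
          (hχ.bdd_mul ((hh n).pow 2) (ae_of_all _ (hsqM n)))

lemma tendsto_integral_sub_sq_mul {f : ℕ → X → ℝ} {F χ : X → ℝ} {M : ℝ}
    (hf : ∀ n, AEStronglyMeasurable (f n) μ) (hF : AEStronglyMeasurable F μ)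
    (hfM : ∀ n x, |f n x| ≤ M) (hFM : ∀ x, |F x| ≤ M) (hχ : Integrable χ μ)
    (hsq : Tendsto (fun n => ∫ x, f n x ^ 2 * χ x ∂μ) atTop (𝓝 (∫ x, F x ^ 2 * χ x ∂μ)))
    (hlin : Tendsto (fun n => ∫ x, f n x * (F x * χ x) ∂μ) atTop
      (𝓝 (∫ x, F x * (F x * χ x) ∂μ))) :
    Tendsto (fun n => ∫ x, (f n x - F x) ^ 2 * χ x ∂μ) atTop (𝓝 0) := by
  have hsqM : ∀ g : X → ℝ, (∀ x, |g x| ≤ M) → ∀ᵐ x ∂μ, ‖g x ^ 2‖ ≤ M ^ 2 := fun g hg =>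
    ae_of_all _ fun x => by
      rw [norm_pow, norm_eq_abs]; exact pow_le_pow_left₀ (abs_nonneg _) (hg x) 2
  have hFχ : Integrable (fun x => F x * χ x) μ := hχ.bdd_mul hF (ae_of_all _ hFM)
  have hFF : ∫ x, F x * (F x * χ x) ∂μ = ∫ x, F x ^ 2 * χ x ∂μ :=
    integral_congr_ae (ae_of_all _ fun x => by ring)
  have hexpand : ∀ n, ∫ x, (f n x - F x) ^ 2 * χ x ∂μ = ∫ x, f n x ^ 2 * χ x ∂μ
      - 2 * ∫ x, f n x * (F x * χ x) ∂μ + ∫ x, F x * (F x * χ x) ∂μ := fun n => by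
    have h1 : Integrable (fun x => f n x ^ 2 * χ x) μ :=
      hχ.bdd_mul ((hf n).pow 2) (hsqM _ (hfM n))
    have h2 : Integrable (fun x => 2 * (f n x * (F x * χ x))) μ :=
      (hFχ.bdd_mul (hf n) (ae_of_all _ (hfM n))).const_mul 2
    rw [integral_congr_ae (g := fun x => (f n x ^ 2 * χ x - 2 * (f n x * (F x * χ x)))
        + F x * (F x * χ x)) (ae_of_all _ fun x => by ring),
      integral_add (f := fun x => f n x ^ 2 * χ x - 2 * (f n x * (F x * χ x))) (h1.sub h2)
        (hFχ.bdd_mul hF (ae_of_all _ hFM)), integral_sub h1 h2,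
      integral_const_mul]
  have hlim := (hsq.sub (hlin.const_mul 2)).add_const (∫ x, F x * (F x * χ x) ∂μ)
  rw [funext hexpand]
  convert hlim using 2
  rw [hFF]; ring

end Integrals

section LocallyCompact

variable {X : Type*} [TopologicalSpace X] [NormalSpace X] [R1Space X] [LocallyCompactSpace X]
  [MeasurableSpace X] [BorelSpace X] {μ : Measure X} [μ.Regular]

lemma exists_continuous_tsupport_subset_integral_abs_sub_le {O L : Set X} (hO : IsOpen O)
    (hL : IsCompact L) (hLO : L ⊆ O) {g : X → ℝ} (hg : Integrable g μ) (hgL : support g ⊆ L)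
    {δ : ℝ} (hδ : 0 < δ) :
    ∃ ρ : X → ℝ, Continuous ρ ∧ HasCompactSupport ρ ∧ tsupport ρ ⊆ O ∧
      ∫ x, |g x - ρ x| ∂μ ≤ δ := by
  obtain ⟨ρ₀, hρ₀cs, hρ₀g, hρ₀c, hρ₀⟩ := hg.exists_hasCompactSupport_integral_sub_le hδ
  -- A cutoff equal to `1` on `L` moves the support of `ρ₀` into `O` without moving it away
  -- from `g`, which vanishes off `L`.
  obtain ⟨χ, hχL, -, hχO, hχ01⟩ := exists_continuousMap_one_of_isCompact_subset_isOpen hL hO hLO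
  have hρc : Continuous fun x => ρ₀ x * χ x := hρ₀c.mul χ.continuous
  have hρcs : HasCompactSupport fun x => ρ₀ x * χ x := hρ₀cs.mul_right
  refine ⟨_, hρc, hρcs, tsupport_mul_subset_right.trans hχO, le_trans ?_ hρ₀g⟩
  refine integral_mono (hg.sub (hρc.integrable_of_hasCompactSupport hρcs)).abs
    (hg.sub hρ₀).norm fun x => ?_
  by_cases hx : x ∈ L
  · simp [hχL hx]
  · simp only [notMem_support.1 fun h => hx (hgL h), zero_sub, abs_neg, norm_neg, norm_eq_abs,
      abs_mul]
    exact mul_le_of_le_one_right (abs_nonneg _) ((abs_of_nonneg (hχ01 x).1).trans_le (hχ01 x).2)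

lemma tendsto_integral_mul_of_forall_continuous {O L : Set X} (hO : IsOpen O)
    (hL : IsCompact L) (hLO : L ⊆ O) {f : ℕ → X → ℝ} {F : X → ℝ} {M : ℝ}
    (hf : ∀ n, AEStronglyMeasurable (f n) μ) (hF : AEStronglyMeasurable F μ)
    (hfM : ∀ n x, |f n x| ≤ M) (hFM : ∀ x, |F x| ≤ M)
    (hconv : ∀ ρ : X → ℝ, Continuous ρ → HasCompactSupport ρ → tsupport ρ ⊆ O →
      Tendsto (fun n => ∫ x, f n x * ρ x ∂μ) atTop (𝓝 (∫ x, F x * ρ x ∂μ)))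
    {g : X → ℝ} (hg : Integrable g μ) (hgL : support g ⊆ L) :
    Tendsto (fun n => ∫ x, f n x * g x ∂μ) atTop (𝓝 (∫ x, F x * g x ∂μ)) := by
  choose ρ hρc hρcs hρO hρg using fun k : ℕ =>
    exists_continuous_tsupport_subset_integral_abs_sub_le (μ := μ) hO hL hLO hg hgL
      (Nat.one_div_pos_of_nat (n := k))
  have hρ : ∀ k, Integrable (ρ k) μ := fun k => (hρc k).integrable_of_hasCompactSupport (hρcs k)
  have hρg' : Tendsto (fun k => ∫ x, |g x - ρ k x| ∂μ) atTop (𝓝 0) :=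
    squeeze_zero (fun k => integral_nonneg fun _ => abs_nonneg _) hρg
      tendsto_one_div_add_atTop_nhds_zero_nat
  rw [tendsto_iff_norm_sub_tendsto_zero]
  refine tendsto_zero_of_le_of_tendsto (L := atTop) (fun n => norm_nonneg _) (fun k n => ?_)
    (fun k => tendsto_const_nhds.add (tendsto_iff_norm_sub_tendsto_zero.1
      (hconv _ (hρc k) (hρcs k) (hρO k))))
    (by simpa using (hρg'.const_mul M).const_mul 2)
  have hfρ := abs_integral_mul_sub_integral_mul_le (hf n) (hfM n) hg (hρ k)
  have hFρ := abs_integral_mul_sub_integral_mul_le hF hFM hg (hρ k)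
  simp only [norm_eq_abs] at hFρ ⊢
  rw [abs_sub_comm] at hFρ
  linarith [abs_sub_le (∫ x, f n x * g x ∂μ) (∫ x, f n x * ρ k x ∂μ) (∫ x, F x * g x ∂μ),
    abs_sub_le (∫ x, f n x * ρ k x ∂μ) (∫ x, F x * ρ k x ∂μ) (∫ x, F x * g x ∂μ)]

end LocallyCompact

lemma tendsto_setIntegral_abs_sub_of_tendsto_integral_mul {X : Type*} [TopologicalSpace X]
    [NormalSpace X] [T2Space X] [LocallyCompactSpace X] [MeasurableSpace X] [BorelSpace X]
    {μ : Measure X} [μ.Regular] {O K : Set X} (hO : IsOpen O) (hK : IsCompact K)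
    {χ : X → ℝ} (hχc : Continuous χ) (hχcs : HasCompactSupport χ) (hχO : tsupport χ ⊆ O)
    (hχ0 : ∀ x, 0 ≤ χ x) (hχK : EqOn χ 1 K) {f : ℕ → X → ℝ} {F : X → ℝ} {M : ℝ}
    (hf : ∀ n, AEStronglyMeasurable (f n) μ) (hF : AEStronglyMeasurable F μ)
    (hfM : ∀ n x, |f n x| ≤ M) (hFM : ∀ x, |F x| ≤ M)
    (hconv : ∀ ρ : X → ℝ, Continuous ρ → HasCompactSupport ρ → tsupport ρ ⊆ O →
      Tendsto (fun n => ∫ x, f n x * ρ x ∂μ) atTop (𝓝 (∫ x, F x * ρ x ∂μ)))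
    (hsq : Tendsto (fun n => ∫ x, f n x ^ 2 * χ x ∂μ) atTop (𝓝 (∫ x, F x ^ 2 * χ x ∂μ))) :
    Tendsto (fun n => ∫ x in K, |f n x - F x| ∂μ) atTop (𝓝 0) := by
  have hχ : Integrable χ μ := hχc.integrable_of_hasCompactSupport hχcs
  have hlin := tendsto_integral_mul_of_forall_continuous hO hχcs hχO hf hF hfM hFM hconv
    (hχ.bdd_mul hF (ae_of_all _ hFM)) ((support_mul_subset_right _ _).trans (subset_tsupport χ))
  exact tendsto_setIntegral_abs_of_tendsto_integral_sq_mul hK.measurableSet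
    hK.measure_lt_top.ne (fun n => (hf n).sub hF)
    (fun n x => (abs_sub _ _).trans (add_le_add (hfM n x) (hFM x))) hχ hχ0 hχK
    (tendsto_integral_sub_sq_mul hf hF hfM hFM hχ hsq hlin)

section Truncation

variable {X : Type*} [MeasurableSpace X] {μ : Measure X}

lemma abs_sub_le_abs_smoothTrunc_sub_add (k s t : ℝ) :
    |s - t| ≤ |smoothTrunc k s - smoothTrunc k t| + smoothExcess k s + smoothExcess k t := by
  have hs := abs_sub_smoothTrunc_le k s
  have ht := abs_sub_smoothTrunc_le k t
  rw [abs_le] at hs ht ⊢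
  constructor <;> linarith [le_abs_self (smoothTrunc k s - smoothTrunc k t),
    neg_abs_le (smoothTrunc k s - smoothTrunc k t)]

lemma integrableOn_smoothExcess_comp {L : Set X} {k : ℝ} (hk : 0 ≤ k) {v : X → ℝ}
    (hv : IntegrableOn v L μ) : IntegrableOn (fun x => smoothExcess k (v x)) L μ :=
  hv.abs.mono' ((continuous_smoothExcess k).comp_aestronglyMeasurable hv.1)
    (ae_of_all _ fun x => by
      rw [norm_eq_abs, abs_of_nonneg (smoothExcess_nonneg k _)]; exact smoothExcess_le_abs hk _)

lemma tendsto_setIntegral_smoothExcess_comp {L : Set X} {u : X → ℝ} (hu : IntegrableOn u L μ) :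
    Tendsto (fun k : ℕ => ∫ x in L, smoothExcess k (u x) ∂μ) atTop (𝓝 0) := by
  have hpt : ∀ x, Tendsto (fun k : ℕ => smoothExcess k (u x)) atTop (𝓝 0) := fun x =>
    tendsto_const_nhds.congr' <| (eventually_ge_atTop ⌈|u x|⌉₊).mono fun k hk =>
      (smoothExcess_of_abs_le ((Nat.le_ceil _).trans (by exact_mod_cast hk))).symm
  simpa using tendsto_integral_of_dominated_convergence (fun x => |u x|)
    (fun k => (integrableOn_smoothExcess_comp k.cast_nonneg hu).1) hu.abs
    (fun k => ae_of_all _ fun x => by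
      rw [norm_eq_abs, abs_of_nonneg (smoothExcess_nonneg _ _)]
      exact smoothExcess_le_abs k.cast_nonneg _)
    (ae_of_all _ hpt)

lemma tendsto_integral_smoothExcess_mul_add_setIntegral {L : Set X} {χ u : X → ℝ}
    (hχ01 : ∀ x, χ x ∈ Icc 0 1) (hχL : support χ ⊆ L) (hu : IntegrableOn u L μ) :
    Tendsto (fun k : ℕ => ∫ x, smoothExcess k (u x) * χ x ∂μ + ∫ x in L, smoothExcess k (u x) ∂μ)
      atTop (𝓝 0) := by
  have hEu := tendsto_setIntegral_smoothExcess_comp hu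
  refine squeeze_zero (fun k => add_nonneg ?_ ?_) (fun k => add_le_add_left ?_ _)
    (by simpa using hEu.add hEu)
  · exact integral_nonneg fun x => mul_nonneg (smoothExcess_nonneg _ _) (hχ01 x).1
  · exact integral_nonneg fun _ => smoothExcess_nonneg _ _
  · exact integral_mul_le_setIntegral (fun _ => smoothExcess_nonneg _ _) hχ01 hχL
      (integrableOn_smoothExcess_comp k.cast_nonneg hu)

lemma setIntegral_abs_sub_le_smoothTrunc {K L : Set X} {χ v w : X → ℝ} {k : ℝ} (hk : 0 ≤ k)
    (hK : MeasurableSet K) (hKμ : μ K ≠ ⊤) (hKL : K ⊆ L) (hχ : AEStronglyMeasurable χ μ)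
    (hχ01 : ∀ x, χ x ∈ Icc 0 1) (hχK : EqOn χ 1 K) (hχL : support χ ⊆ L)
    (hv : IntegrableOn v L μ) (hw : IntegrableOn w L μ) :
    ∫ x in K, |v x - w x| ∂μ ≤ ∫ x in K, |smoothTrunc k (v x) - smoothTrunc k (w x)| ∂μ
      + ∫ x, smoothExcess k (v x) * χ x ∂μ + ∫ x in L, smoothExcess k (w x) ∂μ := by
  have hTc := continuous_smoothTrunc k
  have hvK := hv.mono_set hKL
  have hwK := hw.mono_set hKL
  have hEv := integrableOn_smoothExcess_comp hk hv
  have hEw := integrableOn_smoothExcess_comp hk hw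
  have hT : IntegrableOn (fun x => |smoothTrunc k (v x) - smoothTrunc k (w x)|) K μ :=
    (integrableOn_const hKμ (C := 2 * (k + 1))).mono'
      (continuous_abs.comp_aestronglyMeasurable ((hTc.comp_aestronglyMeasurable hvK.1).sub
        (hTc.comp_aestronglyMeasurable hwK.1)))
      (ae_of_all _ fun x => by
        rw [norm_eq_abs, abs_abs]
        linarith [abs_sub (smoothTrunc k (v x)) (smoothTrunc k (w x)),
          abs_smoothTrunc_le hk (v x), abs_smoothTrunc_le hk (w x)])
  have hTv : IntegrableOn (fun x => |smoothTrunc k (v x) - smoothTrunc k (w x)|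
      + smoothExcess k (v x)) K μ := hT.add (hEv.mono_set hKL)
  calc ∫ x in K, |v x - w x| ∂μ
      ≤ ∫ x in K, (|smoothTrunc k (v x) - smoothTrunc k (w x)| + smoothExcess k (v x)
          + smoothExcess k (w x)) ∂μ :=
        setIntegral_mono_on (hvK.sub hwK).abs (hTv.add (hEw.mono_set hKL))
          hK fun x _ => abs_sub_le_abs_smoothTrunc_sub_add k (v x) (w x)
    _ = ∫ x in K, |smoothTrunc k (v x) - smoothTrunc k (w x)| ∂μ
          + ∫ x in K, smoothExcess k (v x) ∂μ + ∫ x in K, smoothExcess k (w x) ∂μ := by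
        rw [integral_add hTv (hEw.mono_set hKL),
          integral_add hT (hEv.mono_set hKL)]
    _ ≤ _ := by
        refine add_le_add (add_le_add le_rfl ?_) ?_
        · exact setIntegral_le_integral_mul hK (fun x => smoothExcess_nonneg k (v x))
            (fun x => (hχ01 x).1) hχK (hEv.integrable_mul_of_support_subset hχ
              (fun x => (abs_of_nonneg (hχ01 x).1).trans_le (hχ01 x).2) hχL)
        · exact setIntegral_mono_set hEw (ae_of_all _ fun x => smoothExcess_nonneg k _)
            hKL.eventuallyLE

end Truncation

/-- Lemma 5.2 of the paper: if `(u_n)` is bounded in `L¹_loc(O)` and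
`β(u_n) → β(u)` in the sense of distributions for every `β ∈ W²'∞_loc(ℝ)` with `β''`
compactly supported, then `u_n → u` strongly in `L¹_loc(O)`. -/
theorem stmt_12 {d : ℕ} (O : Set (EuclideanSpace ℝ (Fin d))) (hO : IsOpen O)
    (un : ℕ → EuclideanSpace ℝ (Fin d) → ℝ) (u : EuclideanSpace ℝ (Fin d) → ℝ)
    (hunmeas : ∀ n, Measurable (un n)) (humeas : Measurable u)
    (hbdd : ∀ K : Set (EuclideanSpace ℝ (Fin d)), IsCompact K → K ⊆ O →
      (∀ n, IntegrableOn (un n) K volume) ∧ IntegrableOn u K volume ∧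
      ∃ C : ℝ, ∀ n, (∫ y in K, |un n y|) ≤ C)
    (hconv : ∀ β : ℝ → ℝ, ContDiff ℝ 2 β → HasCompactSupport (iteratedDeriv 2 β) →
      ∀ χ : EuclideanSpace ℝ (Fin d) → ℝ, Continuous χ → HasCompactSupport χ →
      tsupport χ ⊆ O →
      Tendsto (fun n => ∫ y, β (un n y) * χ y) atTop (nhds (∫ y, β (u y) * χ y))) :
    ∀ K : Set (EuclideanSpace ℝ (Fin d)), IsCompact K → K ⊆ O →
      Tendsto (fun n => ∫ y in K, |un n y - u y|) atTop (nhds 0) := by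
  intro K hK hKO
  obtain ⟨χ, hχK, hχcs, hχO, hχ01⟩ := exists_continuousMap_one_of_isCompact_subset_isOpen hK hO hKO
  have hKL : K ⊆ tsupport χ := fun y hy => subset_tsupport χ (by simp [hχK hy])
  obtain ⟨hun, hu, -⟩ := hbdd _ hχcs hχO
  have hT (k : ℕ) : Tendsto (fun n => ∫ y in K, |smoothTrunc k (un n y) - smoothTrunc k (u y)|)
      atTop (𝓝 0) := by
    have hTm := (continuous_smoothTrunc k).measurable
    exact tendsto_setIntegral_abs_sub_of_tendsto_integral_mul hO hK χ.continuous hχcs hχO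
      (fun y => (hχ01 y).1) hχK (fun n => (hTm.comp (hunmeas n)).aestronglyMeasurable)
      (hTm.comp humeas).aestronglyMeasurable (fun n y => abs_smoothTrunc_le k.cast_nonneg _)
      (fun y => abs_smoothTrunc_le k.cast_nonneg _)
      (hconv _ (contDiff_smoothTrunc k)
        (hasCompactSupport_iteratedDeriv_two_smoothTrunc k.cast_nonneg))
      (hconv _ ((contDiff_smoothTrunc k).pow 2)
        (hasCompactSupport_iteratedDeriv_two_smoothTrunc_sq k.cast_nonneg) _ χ.continuous hχcs hχO)
  have hE (k : ℕ) := hconv (smoothExcess k) (contDiff_smoothExcess k)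
    (hasCompactSupport_iteratedDeriv_two_smoothExcess k.cast_nonneg) _ χ.continuous hχcs hχO
  refine tendsto_zero_of_le_of_tendsto (L := atTop) (fun n => integral_nonneg fun _ => abs_nonneg _)
    (fun k n => setIntegral_abs_sub_le_smoothTrunc k.cast_nonneg hK.measurableSet
      hK.measure_lt_top.ne hKL χ.continuous.aestronglyMeasurable hχ01 hχK (subset_tsupport χ)
      (hun n) hu)
    (fun k => ((hT k).add (hE k)).add_const _)
    (by simpa using tendsto_integral_smoothExcess_mul_add_setIntegral hχ01 (subset_tsupport χ) hu)
end
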